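/- Let T be a Toeplitz operator on ℓ²(ℕ, ℂ) (S₀* T S₀ = T) with symbol coefficients φ_k (k ∈ ℤ), and let C be a conjugation on ℓ²(ℕ, ℂ) with canonical factorization C = U ∘ J; set f_n := U e_n = C e_n for n ∈ ℕ. Then T is C-symmetric (C T* C = T) if and only if ⟨T f_n, f_m⟩ = φ_{n−m} for all m, n ∈ ℕ; that is, the matrix of T with respect to the orthonormal basis {f_n} equals the transpose of the Toeplitz matrix of T with respect to the standard basis {e_n}. -/

import Mathlib

/-! A conjugation is antiunitary, `⟪C u, C v⟫ = ⟪v, u⟫`, so `C T* C` is a bounded complex-linear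
operator whose matrix entry `⟪b m, C T* C (b n)⟫` in a Hilbert basis `b` equals
`⟪C (b n), T (C (b m))⟫`, the transposed entry of `T` in the basis `C ∘ b`. A bounded operator is
determined by its matrix in a Hilbert basis, so `C T* C = T` exactly when the two matrices are
transposes of each other. For the standard basis of `ℓ²` we have `C e_n = U (J e_n) = f_n`, and the
entries `⟪e_m, T e_n⟫` are the symbol coefficients `φ_{m-n}`. -/

noncomputable section
open scoped ComplexConjugate
open ContinuousLinearMap

/-- A conjugation on a complex Hilbert space: an antilinear, involutive, isometric map. -/
def IsConjugation {E : Type*} [NormedAddCommGroup E] [InnerProductSpace ℂ E] (C : E → E) : Prop :=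
  (∀ (a : ℂ) (f g : E), C (a • f + g) = conj a • C f + C g) ∧
  (∀ f, C (C f) = f) ∧
  (∀ f, ‖C f‖ = ‖f‖)

/-- The inner product in the paper's convention: linear in the first argument and
conjugate-linear in the second (Mathlib's `inner` with the arguments swapped). -/
def ip {E : Type*} [NormedAddCommGroup E] [InnerProductSpace ℂ E] (x y : E) : ℂ :=
  inner ℂ y x

/-- `ℓ²(ℕ, ℂ)`, identified with the Hardy space `H²(𝔻)` via Taylor coefficients. -/
abbrev Ell2 : Type := lp (fun _ : ℕ => ℂ) 2

/-- The standard orthonormal basis of `ℓ²(ℕ, ℂ)`. -/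
def e (n : ℕ) : Ell2 := lp.single 2 n 1

open scoped InnerProductSpace

namespace HilbertBasis

variable {ι 𝕜 E : Type*} [RCLike 𝕜] [NormedAddCommGroup E] [InnerProductSpace 𝕜 E]

theorem default_apply [DecidableEq ι] (i : ι) :
    (default : HilbertBasis ι 𝕜 (lp (fun _ : ι => 𝕜) 2)) i = lp.single 2 i 1 := by
  rw [← HilbertBasis.repr_symm_single]; rfl

theorem ext_inner (b : HilbertBasis ι 𝕜 E) {x y : E} (h : ∀ i, ⟪b i, x⟫_𝕜 = ⟪b i, y⟫_𝕜) :
    x = y :=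
  b.repr.injective <| lp.ext <| funext fun i => by simp only [b.repr_apply_apply, h]

theorem continuousLinearMap_ext (b : HilbertBasis ι 𝕜 E) {A B : E →L[𝕜] E}
    (h : ∀ m n, ⟪b m, A (b n)⟫_𝕜 = ⟪b m, B (b n)⟫_𝕜) : A = B :=
  ContinuousLinearMap.ext_on (Submodule.dense_iff_topologicalClosure_eq_top.mpr b.dense_span)
    (by rintro _ ⟨n, rfl⟩; exact b.ext_inner fun m => h m n)

end HilbertBasis

namespace IsConjugation

variable {E : Type*} [NormedAddCommGroup E] [InnerProductSpace ℂ E] {C : E → E}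

theorem map_add (hC : IsConjugation C) (x y : E) : C (x + y) = C x + C y := by
  simpa using hC.1 1 x y

theorem map_smul (hC : IsConjugation C) (a : ℂ) (x : E) : C (a • x) = conj a • C x := by
  simpa [show C 0 = 0 by simpa using hC.map_add 0 0] using hC.1 a x 0

theorem re_inner_map_map (hC : IsConjugation C) (x y : E) :
    (⟪C x, C y⟫_ℂ).re = (⟪x, y⟫_ℂ).re := by
  simp only [← RCLike.re_to_complex,
    re_inner_eq_norm_add_mul_self_sub_norm_mul_self_sub_norm_mul_self_div_two, ← hC.map_add,
    hC.2.2]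

theorem inner_map_map (hC : IsConjugation C) (x y : E) : ⟪C x, C y⟫_ℂ = ⟪y, x⟫_ℂ := by
  -- imaginary parts are real parts after multiplying by `I`, which `C` turns into `-I`
  have him := hC.re_inner_map_map x (Complex.I • y)
  rw [hC.map_smul, inner_smul_right, inner_smul_right] at him
  rw [← inner_conj_symm y x]
  apply Complex.ext
  · rw [Complex.conj_re]; exact hC.re_inner_map_map x y
  · rw [Complex.conj_im]; simpa using him

def toLinearIsometryEquiv (hC : IsConjugation C) : E ≃ₗᵢ⋆[ℂ] E where
  toFun := C
  invFun := C
  map_add' := hC.map_add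
  map_smul' := hC.map_smul
  left_inv := hC.2.1
  right_inv := hC.2.1
  norm_map' := hC.2.2

variable [CompleteSpace E]

def conjAdjointConj (hC : IsConjugation C) (T : E →L[ℂ] E) : E →L[ℂ] E :=
  let C' : E →L⋆[ℂ] E := hC.toLinearIsometryEquiv.toContinuousLinearEquiv.toContinuousLinearMap
  C'.comp ((adjoint T).comp C')

theorem conjAdjointConj_apply (hC : IsConjugation C) (T : E →L[ℂ] E) (x : E) :
    hC.conjAdjointConj T x = C (adjoint T (C x)) := rfl

theorem inner_conjAdjointConj_apply (hC : IsConjugation C) (T : E →L[ℂ] E) (x y : E) :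
    ⟪y, hC.conjAdjointConj T x⟫_ℂ = ⟪C x, T (C y)⟫_ℂ := by
  rw [conjAdjointConj_apply, ← hC.2.1 y, hC.inner_map_map, adjoint_inner_left, hC.2.1]

theorem conjAdjointConj_eq_self_iff {ι : Type*} (hC : IsConjugation C) (b : HilbertBasis ι ℂ E)
    (T : E →L[ℂ] E) :
    hC.conjAdjointConj T = T ↔ ∀ m n, ⟪C (b m), T (C (b n))⟫_ℂ = ⟪b n, T (b m)⟫_ℂ := by
  constructor
  · intro h m n
    rw [← hC.inner_conjAdjointConj_apply, h]
  · intro h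
    refine b.continuousLinearMap_ext fun m n => ?_
    rw [hC.inner_conjAdjointConj_apply, h]

end IsConjugation

theorem c_symmetric_iff_matrix_transpose_general
    (T : Ell2 →L[ℂ] Ell2)
    (φ : ℤ → ℂ) (hφ : ∀ m n : ℕ, φ ((m : ℤ) - (n : ℤ)) = ip (T (e n)) (e m))
    (C : Ell2 → Ell2) (hC : IsConjugation C)
    (J : Ell2 → Ell2) (hJe : ∀ n, J (e n) = e n)
    (U : Ell2 ≃ₗᵢ[ℂ] Ell2) (hU : ∀ x, C x = U (J x))
    (f : ℕ → Ell2) (hf : ∀ n, f n = U (e n)) :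
    (∀ x, C (adjoint T (C x)) = T x) ↔
      ∀ m n : ℕ, ip (T (f n)) (f m) = φ ((n : ℤ) - (m : ℤ)) := by
  have hCe : ∀ n, C (e n) = f n := fun n => by rw [hU, hJe, hf]
  have hb : ∀ n, (default : HilbertBasis ℕ ℂ Ell2) n = e n := HilbertBasis.default_apply
  simp only [← hC.conjAdjointConj_apply, ← ContinuousLinearMap.ext_iff]
  rw [hC.conjAdjointConj_eq_self_iff (default : HilbertBasis ℕ ℂ Ell2)]
  simp only [hb, hCe, hφ, ip]

/-- Let `T` be a Toeplitz operator on `ℓ²(ℕ, ℂ)` with symbol coefficients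
`φ_k` (`φ_{m−n} = ⟨T e_n, e_m⟩`), and let `C` be a conjugation with canonical factorization
`C = U ∘ J`; set `f_n := U e_n = C e_n`.  Then `T` is `C`-symmetric (`C T* C = T`) if and only
if `⟨T f_n, f_m⟩ = φ_{n−m}` for all `m, n ∈ ℕ`, i.e. the matrix of `T` with respect to `{f_n}`
is the transpose of its Toeplitz matrix with respect to `{e_n}`. -/
theorem c_symmetric_iff_matrix_transpose
    (S₀ T : Ell2 →L[ℂ] Ell2) (hS₀ : ∀ n, S₀ (e n) = e (n + 1))
    (hT : (adjoint S₀).comp (T.comp S₀) = T)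
    (φ : ℤ → ℂ) (hφ : ∀ m n : ℕ, φ ((m : ℤ) - (n : ℤ)) = ip (T (e n)) (e m))
    (C : Ell2 → Ell2) (hC : IsConjugation C)
    (J : Ell2 → Ell2) (hJ : IsConjugation J) (hJe : ∀ n, J (e n) = e n)
    (U : Ell2 ≃ₗᵢ[ℂ] Ell2) (hU : ∀ x, C x = U (J x))
    (f : ℕ → Ell2) (hf : ∀ n, f n = U (e n)) :
    (∀ x, C (adjoint T (C x)) = T x) ↔
      ∀ m n : ℕ, ip (T (f n)) (f m) = φ ((n : ℤ) - (m : ℤ)) :=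
  c_symmetric_iff_matrix_transpose_general T φ hφ C hC J hJe U hU f hf
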